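/- Fix integers a ≥ 0 and j ≥ 2 with a + j ≤ n. Let r ∈ S_n be the permutation that reverses the interval {a+1, …, a+j} (i.e., r(a + t) = a + j + 1 − t for 1 ≤ t ≤ j) and fixes all other points, and let (c_1, …, c_M) be any reduced word for r (so M = j(j−1)/2, and each c_t satisfies a+1 ≤ c_t ≤ a+j−1). Let F and G be complete flags in ℂⁿ with F(b) = G(b) for every b with b ≤ a or b ≥ a + j. Then there exist complete flags H^0 = F, H^1, …, H^M = G such that for each 1 ≤ t ≤ M, H^t(b) = H^{t−1}(b) for every b ≠ c_t. (This is the fiberwise surjectivity of the refinement map from an ordinary Bott–Samelson variety onto the generalized Bott–Samelson variety of a zonotopal tiling, used to show that each generalized Bott–Samelson variety resolves the Schubert variety.) -/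

import Mathlib

/-!
Say that complete flags `F`, `G` are in position at most `w` when
`dim (F p ⊓ G q) ≥ #{i < q | w i < p}` for all `p`, `q`. Flags agreeing outside the interval
`(a, a + j)` are in position at most the reversal `r` of that interval, and flags in position at
most `1` coincide. If `F`, `G` are in position at most `s_k w`, choose `v ∈ F (k+1) \ F (k-1)`
lying in `G q` for the least possible `q`; replacing `F k` by `F (k-1) + ℂ v` gives a flag in
position at most `w` with `G`. Peeling off the letters of a word for `r` one at a time therefore
walks from `F` to `G`.
-/

noncomputable section

/-- The coordinate subspace `span{e₁, …, e_k}` of `ℂⁿ` (standard basis `eᵢ = Pi.single i 1`). -/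
def stdSub (n k : ℕ) : Submodule ℂ (Fin n → ℂ) :=
  Submodule.span ℂ {v : Fin n → ℂ | ∃ t : Fin n, (t : ℕ) < k ∧ v = Pi.single t 1}

/-- A complete flag in `ℂⁿ`: a monotone function `{0,…,n} → Submodule ℂ ℂⁿ`
with `dim F(k) = k`. -/
def IsCompleteFlag (n : ℕ) (F : Fin (n + 1) → Submodule ℂ (Fin n → ℂ)) : Prop :=
  Monotone F ∧ ∀ k : Fin (n + 1), Module.finrank ℂ (F k) = (k : ℕ)

/-- The standard flag `E(k) = span{e₁, …, e_k}`. -/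
def stdFlag (n : ℕ) : Fin (n + 1) → Submodule ℂ (Fin n → ℂ) := fun k => stdSub n (k : ℕ)

/-- Magyar's description of the Bott–Samelson set `BS^i` for a word `i = (i_1, …, i_m)`:
sequences of complete flags `(F^0, …, F^m)` with `F^0 = E` the standard flag, and for each
`1 ≤ k ≤ m`, `F^k(a) = F^{k-1}(a)` for all `a ≠ i_k`.  (The word is indexed so that
`i ⟨k⟩` for `k : Fin m` is the letter `i_{k+1}`.) -/
def InBS (n m : ℕ) (i : Fin m → ℕ)
    (F : Fin (m + 1) → Fin (n + 1) → Submodule ℂ (Fin n → ℂ)) : Prop :=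
  (∀ k, IsCompleteFlag n (F k)) ∧ F 0 = stdFlag n ∧
    ∀ k : Fin m, ∀ a : Fin (n + 1), (a : ℕ) ≠ i k → F k.succ a = F k.castSucc a

/-- For `1 ≤ a ≤ n - 1`, the adjacent transposition `s_a ∈ S_n` interchanging `a` and
`a + 1` (in 1-based labels; 0-indexed it swaps `a - 1` and `a`); junk value `1` otherwise. -/
def sTrans (n : ℕ) (a : ℕ) : Equiv.Perm (Fin n) :=
  if h : 1 ≤ a ∧ a < n then Equiv.swap ⟨a - 1, by omega⟩ ⟨a, h.2⟩ else 1

/-- `c` is a reduced word for `w ∈ S_n`: a sequence of indices of adjacent transpositions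
whose product is `w`, of minimal length among all such sequences. -/
def IsReducedWordFor (n : ℕ) (w : Equiv.Perm (Fin n)) (c : List ℕ) : Prop :=
  (∀ a ∈ c, 1 ≤ a ∧ a ≤ n - 1) ∧ (c.map (sTrans n)).prod = w ∧
    ∀ d : List ℕ, (∀ a ∈ d, 1 ≤ a ∧ a ≤ n - 1) → (d.map (sTrans n)).prod = w →
      c.length ≤ d.length

open Module Submodule Finset

def bruhatRank {n : ℕ} (w : Equiv.Perm (Fin n)) (p q : ℕ) : ℕ :=
  #{i : Fin n | (i : ℕ) < q ∧ (w i : ℕ) < p}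

def InPositionLE {n : ℕ} (w : Equiv.Perm (Fin n))
    (F G : Fin (n + 1) → Submodule ℂ (Fin n → ℂ)) : Prop :=
  ∀ p q : Fin (n + 1), bruhatRank w p q ≤ finrank ℂ ↥(F p ⊓ G q)

section bruhatRank

variable {n : ℕ} (w : Equiv.Perm (Fin n))

lemma bruhatRank_le_right (p q : ℕ) : bruhatRank w p q ≤ q :=
  calc bruhatRank w p q ≤ #{i : Fin n | (i : ℕ) < q} :=
        card_le_card (monotone_filter_right _ fun _ _ h => h.1)
    _ ≤ q := Fin.card_filter_val_lt.trans_le (min_le_right _ _)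

lemma bruhatRank_le_left (p q : ℕ) : bruhatRank w p q ≤ p :=
  calc bruhatRank w p q ≤ #{i : Fin n | (w i : ℕ) < p} :=
        card_le_card (monotone_filter_right _ fun _ _ h => h.2)
    _ = #{i : Fin n | (i : ℕ) < p} := card_equiv w (by simp)
    _ ≤ p := Fin.card_filter_val_lt.trans_le (min_le_right _ _)

lemma bruhatRank_mono_left {p p' : ℕ} (h : p ≤ p') (q : ℕ) :
    bruhatRank w p q ≤ bruhatRank w p' q :=
  card_le_card (monotone_filter_right _ fun _ _ hi => ⟨hi.1, hi.2.trans_le h⟩)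

lemma bruhatRank_succ_left_le (p q : ℕ) : bruhatRank w (p + 1) q ≤ bruhatRank w p q + 1 := by
  have hsub : ({i : Fin n | (i : ℕ) < q ∧ (w i : ℕ) < p + 1} : Finset (Fin n)) ⊆
      ({i : Fin n | (i : ℕ) < q ∧ (w i : ℕ) < p} : Finset (Fin n)) ∪
        ({i : Fin n | (w i : ℕ) = p} : Finset (Fin n)) := by
    intro i
    simp only [mem_filter, mem_union, mem_univ, true_and]
    omega
  have hfiber : #{i : Fin n | (w i : ℕ) = p} ≤ 1 :=
    card_le_one.mpr fun x hx y hy =>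
      w.injective (Fin.ext ((mem_filter.mp hx).2.trans (mem_filter.mp hy).2.symm))
  exact (card_le_card hsub).trans ((card_union_le _ _).trans (by unfold bruhatRank; omega))

lemma bruhatRank_sTrans_mul {k : ℕ} (hk : 1 ≤ k) (hkn : k < n) {p : ℕ} (hp : p ≠ k) (q : ℕ) :
    bruhatRank (sTrans n k * w) p q = bruhatRank w p q := by
  unfold bruhatRank
  congr 1
  refine filter_congr fun i _ => and_congr_right fun _ => ?_
  rw [Equiv.Perm.mul_apply, sTrans, dif_pos ⟨hk, hkn⟩]
  rcases eq_or_ne (w i) ⟨k - 1, by omega⟩ with h | h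
  · rw [h, Equiv.swap_apply_left]
    simp only
    omega
  rcases eq_or_ne (w i) ⟨k, hkn⟩ with h' | h'
  · rw [h', Equiv.swap_apply_right]
    simp only
    omega
  · rw [Equiv.swap_apply_of_ne_of_ne h h']

lemma bruhatRank_one_self {p : ℕ} (hp : p ≤ n) :
    bruhatRank (1 : Equiv.Perm (Fin n)) p p = p := by
  simp [bruhatRank, Fin.card_filter_val_lt, hp]

end bruhatRank

namespace IsCompleteFlag

variable {n : ℕ} {F G : Fin (n + 1) → Submodule ℂ (Fin n → ℂ)}

lemma finrank_inf_self (hF : IsCompleteFlag n F) (p q : Fin (n + 1)) :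
    finrank ℂ ↥(F p ⊓ F q) = min (p : ℕ) q := by
  rcases le_total p q with h | h
  · rw [inf_eq_left.mpr (hF.1 h), hF.2, min_eq_left (Fin.le_iff_val_le_val.mp h)]
  · rw [inf_eq_right.mpr (hF.1 h), hF.2, min_eq_right (Fin.le_iff_val_le_val.mp h)]

lemma le_finrank_inf_of_eq (hF : IsCompleteFlag n F) (hG : IsCompleteFlag n G)
    {b p q : Fin (n + 1)} (hb : F b = G b) (hbp : b ≤ p) (hbq : b ≤ q) :
    (b : ℕ) ≤ finrank ℂ ↥(F p ⊓ G q) := by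
  have hle : F b ≤ F p ⊓ G q := le_inf (hF.1 hbp) (hb ▸ hG.1 hbq)
  exact hF.2 b ▸ finrank_mono hle

lemma add_le_finrank_inf_of_eq (hF : IsCompleteFlag n F) (hG : IsCompleteFlag n G)
    {b p q : Fin (n + 1)} (hb : F b = G b) (hpb : p ≤ b) (hqb : q ≤ b) :
    (p : ℕ) + q ≤ finrank ℂ ↥(F p ⊓ G q) + b := by
  have hsup : finrank ℂ ↥(F p ⊔ G q : Submodule ℂ (Fin n → ℂ)) ≤ b :=
    hF.2 b ▸ finrank_mono (sup_le (hF.1 hpb) (hb ▸ hG.1 hqb))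
  have hsum := finrank_sup_add_finrank_inf_eq (F p) (G q)
  rw [hF.2 p, hG.2 q] at hsum
  omega

lemma eq_of_inPositionLE_one (hF : IsCompleteFlag n F) (hG : IsCompleteFlag n G)
    (h : InPositionLE 1 F G) : F = G := by
  funext p
  have hp : (p : ℕ) ≤ finrank ℂ ↥(F p ⊓ G p) :=
    bruhatRank_one_self (Nat.lt_succ_iff.mp p.2) ▸ h p p
  have hFp : F p ⊓ G p = F p := eq_of_le_of_finrank_le inf_le_left (hF.2 p ▸ hp)
  have hGp : F p ⊓ G p = G p := eq_of_le_of_finrank_le inf_le_right (hG.2 p ▸ hp)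
  rw [← hFp, hGp]

lemma update {k : ℕ} (hF : IsCompleteFlag n F) (hk : 1 ≤ k) (hkn : k < n) {v : Fin n → ℂ}
    (hv : v ∈ F ⟨k + 1, by omega⟩) (hv' : v ∉ F ⟨k - 1, by omega⟩) :
    IsCompleteFlag n (Function.update F ⟨k, by omega⟩ (F ⟨k - 1, by omega⟩ ⊔ ℂ ∙ v)) := by
  have hlo : F ⟨k - 1, by omega⟩ ≤ F ⟨k - 1, by omega⟩ ⊔ ℂ ∙ v := le_sup_left
  have hhi : F ⟨k - 1, by omega⟩ ⊔ ℂ ∙ v ≤ F ⟨k + 1, by omega⟩ :=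
    sup_le (hF.1 (Fin.mk_le_mk.mpr (by omega))) ((span_singleton_le_iff_mem _ _).mpr hv)
  refine ⟨fun b b' hbb' => ?_, fun b => ?_⟩
  · rw [Fin.le_def] at hbb'
    simp only [Function.update_apply, Fin.ext_iff]
    split_ifs with hb hb' hb'
    · exact le_rfl
    · exact hhi.trans (hF.1 (Fin.le_def.mpr (by simp only; omega)))
    · exact (hF.1 (Fin.le_def.mpr (by simp only; omega))).trans hlo
    · exact hF.1 (Fin.le_def.mpr hbb')
  · rcases eq_or_ne b ⟨k, by omega⟩ with rfl | hb
    · rw [Function.update_self, finrank_sup_span_singleton hv', hF.2]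
      simp only
      omega
    · rw [Function.update_of_ne hb]
      exact hF.2 b

end IsCompleteFlag

def IsIntervalReversal {n : ℕ} (a j : ℕ) (r : Equiv.Perm (Fin n)) : Prop :=
  ∀ t : Fin n,
    (a ≤ (t : ℕ) ∧ (t : ℕ) < a + j → ((r t : ℕ) = 2 * a + j - 1 - (t : ℕ))) ∧
    (((t : ℕ) < a ∨ a + j ≤ (t : ℕ)) → r t = t)

section reversal

variable {n a j : ℕ} {r : Equiv.Perm (Fin n)}

lemma bruhatRank_reversal_le (hr : IsIntervalReversal a j r) {p : ℕ} (hpj : p < a + j) (q : ℕ) :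
    bruhatRank r p q ≤ a + (q - (2 * a + j - p)) :=
  calc bruhatRank r p q ≤ #(range a ∪ Ico (2 * a + j - p) q) := by
        refine card_le_card_of_injOn (fun i => (i : ℕ)) (fun i hi => ?_) Fin.val_injective.injOn
        obtain ⟨hiq, hip⟩ : (i : ℕ) < q ∧ (r i : ℕ) < p := by simpa using hi
        simp only [coe_union, coe_range, coe_Ico, Set.mem_union, Set.mem_Iio, Set.mem_Ico]
        rcases lt_or_ge (i : ℕ) a with hia | hia
        · exact Or.inl hia
        rcases lt_or_ge (i : ℕ) (a + j) with hij | hij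
        · have := (hr i).1 ⟨hia, hij⟩
          omega
        · have := (hr i).2 (Or.inr hij)
          rw [this] at hip
          omega
    _ ≤ a + (q - (2 * a + j - p)) := (card_union_le _ _).trans (by simp)

lemma inPositionLE_reversal (hr : IsIntervalReversal a j r) (haj : a + j ≤ n)
    {F G : Fin (n + 1) → Submodule ℂ (Fin n → ℂ)}
    (hF : IsCompleteFlag n F) (hG : IsCompleteFlag n G)
    (hFG : ∀ b : Fin (n + 1), (b : ℕ) ≤ a ∨ a + j ≤ (b : ℕ) → F b = G b) :
    InPositionLE r F G := by
  intro p q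
  have hmin := le_min (bruhatRank_le_left r p q) (bruhatRank_le_right r p q)
  by_cases hp : (p : ℕ) ≤ a ∨ a + j ≤ (p : ℕ)
  · rwa [hFG p hp, hG.finrank_inf_self]
  by_cases hq : (q : ℕ) ≤ a ∨ a + j ≤ (q : ℕ)
  · rwa [← hFG q hq, hF.finrank_inf_self]
  have hlow := hF.le_finrank_inf_of_eq hG (hFG ⟨a, by omega⟩ (Or.inl le_rfl))
    (p := p) (q := q) (Fin.mk_le_of_le_val (by omega)) (Fin.mk_le_of_le_val (by omega))
  have hhigh := hF.add_le_finrank_inf_of_eq hG (hFG ⟨a + j, by omega⟩ (Or.inr le_rfl))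
    (p := p) (q := q) (Fin.le_def.mpr (by simp only; omega))
    (Fin.le_def.mpr (by simp only; omega))
  have hrk := bruhatRank_reversal_le hr (p := p) (by omega) q
  simp only at hlow hhigh
  omega

end reversal

lemma exists_update_inPositionLE {n k : ℕ} (hk : 1 ≤ k) (hkn : k < n) {w : Equiv.Perm (Fin n)}
    {F G : Fin (n + 1) → Submodule ℂ (Fin n → ℂ)} (hF : IsCompleteFlag n F)
    (hG : IsCompleteFlag n G) (hFG : InPositionLE (sTrans n k * w) F G) :
    ∃ H, IsCompleteFlag n H ∧ (∀ b : Fin (n + 1), (b : ℕ) ≠ k → H b = F b) ∧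
      InPositionLE w H G := by
  set Flo := F ⟨k - 1, by omega⟩
  set Fhi := F ⟨k + 1, by omega⟩
  have hlast : ¬ Fhi ⊓ G (Fin.last n) ≤ Flo := by
    rw [eq_top_of_finrank_eq ((hG.2 _).trans (finrank_fin_fun ℂ).symm), inf_top_eq]
    intro h
    have := finrank_mono h
    rw [hF.2, hF.2] at this
    simp only at this
    omega
  obtain ⟨q₀, hq₀, hmin⟩ := wellFounded_lt.has_min {q | ¬ Fhi ⊓ G q ≤ Flo} ⟨_, hlast⟩
  obtain ⟨v, hv, hvFlo⟩ := SetLike.not_le_iff_exists.mp hq₀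
  rw [Submodule.mem_inf] at hv
  refine ⟨_, hF.update hk hkn hv.1 hvFlo,
    fun b hb => Function.update_of_ne (Fin.ne_of_val_ne hb) _ _, fun p q => ?_⟩
  rcases eq_or_ne p ⟨k, by omega⟩ with rfl | hp
  · rw [Function.update_self]
    rcases lt_or_ge q q₀ with hq | hq
    · have hle : Fhi ⊓ G q ≤ Flo := not_not.mp fun h => hmin q h hq
      calc bruhatRank w k q ≤ bruhatRank w (k + 1) q := bruhatRank_mono_left w k.le_succ q
        _ = bruhatRank (sTrans n k * w) (k + 1) q :=
          (bruhatRank_sTrans_mul w hk hkn (by omega) q).symm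
        _ ≤ finrank ℂ ↥(Fhi ⊓ G q) := hFG ⟨k + 1, by omega⟩ q
        _ ≤ finrank ℂ ↥((Flo ⊔ ℂ ∙ v) ⊓ G q) :=
          finrank_mono (le_inf (hle.trans le_sup_left) inf_le_right)
    · have hvFv : v ∈ (Flo ⊔ ℂ ∙ v) ⊓ G q :=
        Submodule.mem_inf.mpr ⟨mem_sup_right (mem_span_singleton_self v), hG.1 hq hv.2⟩
      calc bruhatRank w k q ≤ bruhatRank w (k - 1) q + 1 := by
            simpa only [Nat.sub_add_cancel hk] using bruhatRank_succ_left_le w (k - 1) q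
        _ = bruhatRank (sTrans n k * w) (k - 1) q + 1 := by
            rw [bruhatRank_sTrans_mul w hk hkn (by omega)]
        _ ≤ finrank ℂ ↥(Flo ⊓ G q) + 1 := Nat.add_le_add_right (hFG ⟨k - 1, by omega⟩ q) 1
        _ = finrank ℂ ↥(Flo ⊓ G q ⊔ ℂ ∙ v) :=
          (finrank_sup_span_singleton fun h => hvFlo (Submodule.mem_inf.mp h).1).symm
        _ ≤ finrank ℂ ↥((Flo ⊔ ℂ ∙ v) ⊓ G q) :=
          finrank_mono (sup_le (inf_le_inf_right _ le_sup_left)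
            ((span_singleton_le_iff_mem _ _).mpr hvFv))
  · rw [Function.update_of_ne hp, ← bruhatRank_sTrans_mul w hk hkn (Fin.val_ne_of_ne hp)]
    exact hFG p q

lemma exists_gallery_of_inPositionLE {n M : ℕ} (c : Fin M → ℕ) (hc : ∀ t, 1 ≤ c t ∧ c t < n)
    {F G : Fin (n + 1) → Submodule ℂ (Fin n → ℂ)} (hF : IsCompleteFlag n F)
    (hG : IsCompleteFlag n G) (hFG : InPositionLE ((List.ofFn c).map (sTrans n)).prod F G) :
    ∃ H : Fin (M + 1) → Fin (n + 1) → Submodule ℂ (Fin n → ℂ),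
      (∀ t, IsCompleteFlag n (H t)) ∧ H 0 = F ∧ H (Fin.last M) = G ∧
      ∀ t : Fin M, ∀ b : Fin (n + 1), (b : ℕ) ≠ c t → H t.succ b = H t.castSucc b := by
  induction M generalizing F with
  | zero =>
    exact ⟨fun _ => F, fun _ => hF, rfl, hF.eq_of_inPositionLE_one hG (by simpa using hFG),
      finZeroElim⟩
  | succ M ih =>
    rw [List.ofFn_succ, List.map_cons, List.prod_cons] at hFG
    obtain ⟨F', hF', hF'F, hF'G⟩ := exists_update_inPositionLE (hc 0).1 (hc 0).2 hF hG hFG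
    obtain ⟨H, hH, hH0, hHlast, hHstep⟩ := ih (fun t => c t.succ) (fun t => hc t.succ) hF' hF'G
    refine ⟨Fin.cons F H, Fin.cases hF hH, rfl, hHlast, Fin.cases ?_ fun t b hb => ?_⟩
    · intro b hb
      simpa [hH0] using hF'F b hb
    · simpa [← Fin.succ_castSucc] using hHstep t b hb

theorem stmt8 (n M : ℕ) (a j : ℕ) (haj : a + j ≤ n)
    (r : Equiv.Perm (Fin n))
    (hr : ∀ t : Fin n,
      (a ≤ (t : ℕ) ∧ (t : ℕ) < a + j → ((r t : ℕ) = 2 * a + j - 1 - (t : ℕ))) ∧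
      (((t : ℕ) < a ∨ a + j ≤ (t : ℕ)) → r t = t))
    (c : Fin M → ℕ) (hred : IsReducedWordFor n r (List.ofFn c))
    (F G : Fin (n + 1) → Submodule ℂ (Fin n → ℂ))
    (hF : IsCompleteFlag n F) (hG : IsCompleteFlag n G)
    (hFG : ∀ b : Fin (n + 1), (b : ℕ) ≤ a ∨ a + j ≤ (b : ℕ) → F b = G b) :
    ∃ H : Fin (M + 1) → Fin (n + 1) → Submodule ℂ (Fin n → ℂ),
      (∀ t, IsCompleteFlag n (H t)) ∧ H 0 = F ∧ H (Fin.last M) = G ∧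
      ∀ t : Fin M, ∀ b : Fin (n + 1), (b : ℕ) ≠ c t → H t.succ b = H t.castSucc b := by
  obtain ⟨hletters, hprod, -⟩ := hred
  refine exists_gallery_of_inPositionLE c (fun t => ?_) hF hG ?_
  · have := hletters (c t) (List.mem_ofFn.mpr ⟨t, rfl⟩)
    omega
  · exact hprod ▸ inPositionLE_reversal hr haj hF hG hFG
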